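/- Let (π₁, π₂) be a chainable pair of patterns with πᵢ = (aᵢ, bᵢ, cᵢ, dᵢ). Then B^{(π₁,π₂)} = { A ∈ ℂ^{(a₁b₁d₁)×(a₂c₂d₂)} : A[i,j] = 0 whenever S_{π₁*π₂}[i,j] = 0, and rank(A[R_P, C_P]) ≤ r(π₁, π₂) for every P ∈ P(S_{π₁}, S_{π₂}) }. In other words, a matrix is a product X₁X₂ of a π₁-factor and a π₂-factor if and only if its support is contained in that of S_{π₁*π₂} and all its blocks A[R_P, C_P] have rank at most r(π₁, π₂). -/

import Mathlib

/-- A *pattern* is a tuple `(a, b, c, d)` of (positive) natural numbers. -/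
structure Pattern where
  a : ℕ
  b : ℕ
  c : ℕ
  d : ℕ

namespace Pattern

/-- The entries of a pattern are positive integers. -/
def Pos (π : Pattern) : Prop := 0 < π.a ∧ 0 < π.b ∧ 0 < π.c ∧ 0 < π.d

/-- Number of rows `a*b*d` of a `π`-factor. -/
def rows (π : Pattern) : ℕ := π.a * π.b * π.d

/-- Number of columns `a*c*d` of a `π`-factor. -/
def cols (π : Pattern) : ℕ := π.a * π.c * π.d

/-- `r(π₁, π₂) = a₁c₁/a₂ (= b₂d₂/d₁)`. -/
def rk (π₁ π₂ : Pattern) : ℕ := π₁.a * π₁.c / π₂.a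

/-- A pair of patterns is *chainable* if `a₁c₁/a₂ = b₂d₂/d₁` is a positive integer,
`a₁ ∣ a₂` and `d₂ ∣ d₁`. -/
def Chainable (π₁ π₂ : Pattern) : Prop :=
  π₂.a ∣ π₁.a * π₁.c ∧ π₁.d ∣ π₂.b * π₂.d ∧
    π₁.a * π₁.c / π₂.a = π₂.b * π₂.d / π₁.d ∧
    0 < π₁.a * π₁.c / π₂.a ∧ π₁.a ∣ π₂.a ∧ π₂.d ∣ π₁.d

/-- `π₁ * π₂ := (a₁, b₁d₁/d₂, a₂c₂/a₁, d₂)`. -/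
instance : Mul Pattern :=
  ⟨fun π₁ π₂ => ⟨π₁.a, π₁.b * π₁.d / π₂.d, π₂.a * π₂.c / π₁.a, π₂.d⟩⟩

/-- `‖π‖₀ := a*b*c*d`. -/
def norm0 (π : Pattern) : ℕ := π.a * π.b * π.c * π.d

end Pattern

open scoped Kronecker

/-- The flattening equivalence `(Fin a × Fin b) × Fin d ≃ Fin (a*b*d)`. -/
def kron3Equiv (a b d : ℕ) : (Fin a × Fin b) × Fin d ≃ Fin (a * b * d) :=
  (finProdFinEquiv.prodCongr (Equiv.refl (Fin d))).trans finProdFinEquiv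

/-- The support matrix `S_π = I_a ⊗ 1_{b×c} ⊗ I_d ∈ {0,1}^{abd × acd}`. -/
def Pattern.S (π : Pattern) : Matrix (Fin π.rows) (Fin π.cols) ℕ :=
  Matrix.reindex (kron3Equiv π.a π.b π.d) (kron3Equiv π.a π.c π.d)
    ((1 : Matrix (Fin π.a) (Fin π.a) ℕ) ⊗ₖ
      (Matrix.of fun _ _ => (1 : ℕ) : Matrix (Fin π.b) (Fin π.c) ℕ) ⊗ₖ
      (1 : Matrix (Fin π.d) (Fin π.d) ℕ))

/-- Reindexing a matrix along equalities of dimensions. -/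
def castMat {α : Type*} {m n m' n' : ℕ} (hm : m = m') (hn : n = n')
    (A : Matrix (Fin m) (Fin n) α) : Matrix (Fin m') (Fin n') α :=
  Matrix.of fun i j => A (Fin.cast hm.symm i) (Fin.cast hn.symm j)

/-- `X` is a `π`-factor: its support is contained in that of `S_π`. -/
def IsFactor (π : Pattern) (X : Matrix (Fin π.rows) (Fin π.cols) ℂ) : Prop :=
  ∀ i j, π.S i j = 0 → X i j = 0

/-- The rank-one contribution support `U_k = L[:,k] ⬝ R[k,:]` of binary matrices `(L, R)`. -/
def contrib {m r n : ℕ} (L : Matrix (Fin m) (Fin r) ℕ) (R : Matrix (Fin r) (Fin n) ℕ)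
    (k : Fin r) : Matrix (Fin m) (Fin n) ℕ :=
  Matrix.of fun i j => L i k * R k j

open scoped Classical in
/-- The equivalence classes `P(L,R)` of the relation `k ∼ k' ↔ U_k = U_k'` on `Fin r`. -/
noncomputable def classes {m r n : ℕ} (L : Matrix (Fin m) (Fin r) ℕ)
    (R : Matrix (Fin r) (Fin n) ℕ) : Finset (Finset (Fin r)) :=
  Finset.image (fun k => Finset.univ.filter fun k' => contrib L R k' = contrib L R k)
    Finset.univ

open scoped Classical in
/-- `R_P`: the set of indices of nonzero rows of the common rank-one support of `P`. -/
noncomputable def rowSupp {m r n : ℕ} (L : Matrix (Fin m) (Fin r) ℕ)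
    (R : Matrix (Fin r) (Fin n) ℕ) (P : Finset (Fin r)) : Finset (Fin m) :=
  Finset.univ.filter fun i => ∃ k ∈ P, ∃ j, contrib L R k i j ≠ 0

open scoped Classical in
/-- `C_P`: the set of indices of nonzero columns of the common rank-one support of `P`. -/
noncomputable def colSupp {m r n : ℕ} (L : Matrix (Fin m) (Fin r) ℕ)
    (R : Matrix (Fin r) (Fin n) ℕ) (P : Finset (Fin r)) : Finset (Fin n) :=
  Finset.univ.filter fun j => ∃ k ∈ P, ∃ i, contrib L R k i j ≠ 0

/-- The submatrix `A[Rs, Cs]`. -/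
def subm {m n : ℕ} (A : Matrix (Fin m) (Fin n) ℂ) (Rs : Finset (Fin m))
    (Cs : Finset (Fin n)) : Matrix Rs Cs ℂ :=
  Matrix.of fun i j => A i.1 j.1

/-!
Expanding `X₁ X₂ = ∑ₖ X₁[:, k] X₂[k, :]`, the `k`-th term is supported in the rank-one support
`U_k`. When any two of the `U_k` are equal or disjoint, the classes `P` have disjoint
rectangular supports `R_P × C_P`, so the block `A[R_P, C_P]` equals `X₁[R_P, P] X₂[P, C_P]` and
has rank at most `|P|`; conversely, rank factorizations of the blocks, written into the columns
`P` of `X₁` and the rows `P` of `X₂`, reassemble `A`.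

For a chainable pair of patterns, the support `U_m` of the middle index `m` depends only on its
block `m / (b₂ d₂)` for `π₂` and its residue `m mod d₁`. This makes the `U_m` equal or disjoint,
each class has exactly `r(π₁, π₂)` elements, and the union of the `U_m` is the support of
`S_{π₁ * π₂}`.
-/

open Finset

theorem Matrix.exists_mul_eq_of_rank_le {K m n ι : Type*} [Field K] [Fintype m] [Fintype n]
    [Fintype ι] [DecidableEq n] [DecidableEq ι] (M : Matrix m n K)
    (h : M.rank ≤ Fintype.card ι) : ∃ (B : Matrix m ι K) (C : Matrix ι n K), M = B * C := by
  have hdim : Module.finrank K (LinearMap.range M.mulVecLin) ≤ Module.finrank K (ι → K) := by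
    rwa [Module.finrank_fintype_fun_eq_card]
  obtain ⟨f, hf⟩ := finrank_le_iff_exists_linearMap.mp hdim
  obtain ⟨g, hgf⟩ := f.exists_leftInverse_of_injective (LinearMap.ker_eq_bot.mpr hf)
  refine ⟨LinearMap.toMatrix' ((LinearMap.range M.mulVecLin).subtype ∘ₗ g),
    LinearMap.toMatrix' (f ∘ₗ M.mulVecLin.rangeRestrict), ?_⟩
  rw [← LinearMap.toMatrix'_comp, LinearMap.comp_assoc, ← LinearMap.comp_assoc _ f g, hgf,
    LinearMap.id_comp]
  exact (LinearMap.toMatrix'_toLin' M).symm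

section Blocks

variable {m r n : ℕ}

lemma subm_mul_eq_of_forall_notMem (X₁ : Matrix (Fin m) (Fin r) ℂ)
    (X₂ : Matrix (Fin r) (Fin n) ℂ) (Rs : Finset (Fin m)) (Cs : Finset (Fin n))
    (P : Finset (Fin r)) (h : ∀ i ∈ Rs, ∀ j ∈ Cs, ∀ k ∉ P, X₁ i k * X₂ k j = 0) :
    subm (X₁ * X₂) Rs Cs =
      X₁.submatrix (↑) ((↑) : P → Fin r) * X₂.submatrix ((↑) : P → Fin r) (↑) := by
  ext i j
  simp only [subm, Matrix.of_apply, Matrix.mul_apply, Matrix.submatrix_apply]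
  rw [sum_coe_sort P fun k => X₁ i k * X₂ k j]
  exact (sum_subset (subset_univ P) fun k _ hk => h i i.2 j j.2 k hk).symm

lemma rank_subm_mul_le_card_of_forall_notMem (X₁ : Matrix (Fin m) (Fin r) ℂ)
    (X₂ : Matrix (Fin r) (Fin n) ℂ) (Rs : Finset (Fin m)) (Cs : Finset (Fin n))
    (P : Finset (Fin r)) (h : ∀ i ∈ Rs, ∀ j ∈ Cs, ∀ k ∉ P, X₁ i k * X₂ k j = 0) :
    (subm (X₁ * X₂) Rs Cs).rank ≤ #P := by
  rw [subm_mul_eq_of_forall_notMem X₁ X₂ Rs Cs P h]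
  exact (Matrix.rank_mul_le_right _ _).trans
    ((Matrix.rank_le_card_height _).trans_eq (Fintype.card_coe P))

lemma exists_sum_eq_of_rank_subm_le (A : Matrix (Fin m) (Fin n) ℂ) (Rs : Finset (Fin m))
    (Cs : Finset (Fin n)) (P : Finset (Fin r)) (h : (subm A Rs Cs).rank ≤ #P) :
    ∃ (B : Matrix (Fin m) (Fin r) ℂ) (C : Matrix (Fin r) (Fin n) ℂ),
      ∀ i ∈ Rs, ∀ j ∈ Cs, A i j = ∑ k ∈ P, B i k * C k j := by
  classical
  obtain ⟨B, C, hBC⟩ := (subm A Rs Cs).exists_mul_eq_of_rank_le (ι := P)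
    (h.trans_eq (Fintype.card_coe P).symm)
  refine ⟨fun i k => if h : i ∈ Rs ∧ k ∈ P then B ⟨i, h.1⟩ ⟨k, h.2⟩ else 0,
    fun k j => if h : k ∈ P ∧ j ∈ Cs then C ⟨k, h.1⟩ ⟨j, h.2⟩ else 0, fun i hi j hj => ?_⟩
  rw [← sum_coe_sort P]
  have hij := congrFun (congrFun hBC ⟨i, hi⟩) ⟨j, hj⟩
  simp only [subm, Matrix.of_apply, Matrix.mul_apply] at hij
  simp [hij, hi, hj]

end Blocks

section ContribClasses

variable {m r n : ℕ} (L : Matrix (Fin m) (Fin r) ℕ) (R : Matrix (Fin r) (Fin n) ℕ)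

open scoped Classical in
noncomputable def contribClass (k : Fin r) : Finset (Fin r) :=
  univ.filter fun k' => contrib L R k' = contrib L R k

def ContribSupportsDisjoint : Prop :=
  ∀ k k' i j, contrib L R k i j ≠ 0 → contrib L R k' i j ≠ 0 → contrib L R k = contrib L R k'

variable {L R}

lemma mem_classes {P : Finset (Fin r)} : P ∈ classes L R ↔ ∃ k, contribClass L R k = P := by
  simp [classes, contribClass]

lemma mem_contribClass {k k' : Fin r} :
    k' ∈ contribClass L R k ↔ contrib L R k' = contrib L R k := by
  simp [contribClass]

lemma contribClass_eq_of_mem {k k' : Fin r} (h : k' ∈ contribClass L R k) :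
    contribClass L R k' = contribClass L R k := by
  simp only [contribClass, mem_contribClass.1 h]

lemma mem_rowSupp_contribClass {k : Fin r} {i : Fin m} :
    i ∈ rowSupp L R (contribClass L R k) ↔ ∃ j, contrib L R k i j ≠ 0 := by
  simp only [rowSupp, mem_filter, mem_univ, true_and, mem_contribClass]
  constructor
  · rintro ⟨k', hk', hne⟩
    rwa [← hk']
  · exact fun hne => ⟨k, rfl, hne⟩

lemma mem_colSupp_contribClass {k : Fin r} {j : Fin n} :
    j ∈ colSupp L R (contribClass L R k) ↔ ∃ i, contrib L R k i j ≠ 0 := by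
  simp only [colSupp, mem_filter, mem_univ, true_and, mem_contribClass]
  constructor
  · rintro ⟨k', hk', hne⟩
    rwa [← hk']
  · exact fun hne => ⟨k, rfl, hne⟩

lemma ne_zero_of_mem_rowSupp_contribClass {k : Fin r} {i : Fin m}
    (hi : i ∈ rowSupp L R (contribClass L R k)) : L i k ≠ 0 := by
  obtain ⟨j, hj⟩ := mem_rowSupp_contribClass.1 hi
  exact left_ne_zero_of_mul hj

lemma ne_zero_of_mem_colSupp_contribClass {k : Fin r} {j : Fin n}
    (hj : j ∈ colSupp L R (contribClass L R k)) : R k j ≠ 0 := by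
  obtain ⟨i, hi⟩ := mem_colSupp_contribClass.1 hj
  exact right_ne_zero_of_mul hi

lemma contrib_ne_zero_of_mem_rowSupp_of_mem_colSupp {k : Fin r} {i : Fin m} {j : Fin n}
    (hi : i ∈ rowSupp L R (contribClass L R k)) (hj : j ∈ colSupp L R (contribClass L R k)) :
    contrib L R k i j ≠ 0 :=
  mul_ne_zero (ne_zero_of_mem_rowSupp_contribClass hi) (ne_zero_of_mem_colSupp_contribClass hj)

lemma mem_contribClass_of_contrib_ne_zero (hd : ContribSupportsDisjoint L R) {k₀ k : Fin r}
    {i : Fin m} {j : Fin n} (hi : i ∈ rowSupp L R (contribClass L R k₀))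
    (hj : j ∈ colSupp L R (contribClass L R k₀)) (hk : contrib L R k i j ≠ 0) :
    k ∈ contribClass L R k₀ :=
  mem_contribClass.2 <| hd k k₀ i j hk <| contrib_ne_zero_of_mem_rowSupp_of_mem_colSupp hi hj

lemma mul_apply_eq_zero_iff_forall_contrib {i : Fin m} {j : Fin n} :
    (L * R) i j = 0 ↔ ∀ k, contrib L R k i j = 0 := by
  simp [Matrix.mul_apply, contrib]

end ContribClasses

section Characterization

variable {m r n : ℕ} {L : Matrix (Fin m) (Fin r) ℕ} {R : Matrix (Fin r) (Fin n) ℕ}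
  {X₁ : Matrix (Fin m) (Fin r) ℂ} {X₂ : Matrix (Fin r) (Fin n) ℂ}

lemma mul_apply_eq_zero_of_supported (h₁ : ∀ i k, L i k = 0 → X₁ i k = 0)
    (h₂ : ∀ k j, R k j = 0 → X₂ k j = 0) {i : Fin m} {j : Fin n} (h : (L * R) i j = 0) :
    (X₁ * X₂) i j = 0 := by
  rw [Matrix.mul_apply]
  refine sum_eq_zero fun k _ => ?_
  rcases mul_eq_zero.1 (mul_apply_eq_zero_iff_forall_contrib.1 h k) with h | h
  · rw [h₁ i k h, zero_mul]
  · rw [h₂ k j h, mul_zero]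

lemma rank_subm_mul_le_card_of_mem_classes (h₁ : ∀ i k, L i k = 0 → X₁ i k = 0)
    (h₂ : ∀ k j, R k j = 0 → X₂ k j = 0) (hd : ContribSupportsDisjoint L R)
    {P : Finset (Fin r)} (hP : P ∈ classes L R) :
    (subm (X₁ * X₂) (rowSupp L R P) (colSupp L R P)).rank ≤ #P := by
  obtain ⟨k₀, rfl⟩ := mem_classes.1 hP
  refine rank_subm_mul_le_card_of_forall_notMem X₁ X₂ _ _ _ fun i hi j hj k hk => ?_
  by_contra hne
  refine hk (mem_contribClass_of_contrib_ne_zero hd hi hj (mul_ne_zero ?_ ?_))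
  · exact fun h => left_ne_zero_of_mul hne (h₁ i k h)
  · exact fun h => right_ne_zero_of_mul hne (h₂ k j h)

lemma exists_supported_factors_of_rank_le (hd : ContribSupportsDisjoint L R)
    {A : Matrix (Fin m) (Fin n) ℂ} (hA : ∀ i j, (L * R) i j = 0 → A i j = 0)
    (hrank : ∀ P ∈ classes L R, (subm A (rowSupp L R P) (colSupp L R P)).rank ≤ #P) :
    ∃ (X₁ : Matrix (Fin m) (Fin r) ℂ) (X₂ : Matrix (Fin r) (Fin n) ℂ),
      (∀ i k, L i k = 0 → X₁ i k = 0) ∧ (∀ k j, R k j = 0 → X₂ k j = 0) ∧ A = X₁ * X₂ := by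
  classical
  -- Column `k` of `X₁` and row `k` of `X₂` come from the factorization of the block of the
  -- class of `k`.
  choose! B C hBC using fun P hP => exists_sum_eq_of_rank_subm_le A _ _ P (hrank P hP)
  let X₁ : Matrix (Fin m) (Fin r) ℂ := fun i k =>
    if i ∈ rowSupp L R (contribClass L R k) then B (contribClass L R k) i k else 0
  let X₂ : Matrix (Fin r) (Fin n) ℂ := fun k j =>
    if j ∈ colSupp L R (contribClass L R k) then C (contribClass L R k) k j else 0
  have hterm : ∀ i j k, X₁ i k * X₂ k j ≠ 0 →
      i ∈ rowSupp L R (contribClass L R k) ∧ j ∈ colSupp L R (contribClass L R k) :=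
    fun i j k hne =>
      ⟨by_contra fun h => hne (by simp [X₁, h]), by_contra fun h => hne (by simp [X₂, h])⟩
  refine ⟨X₁, X₂, fun i k h => if_neg fun hi => ne_zero_of_mem_rowSupp_contribClass hi h,
    fun k j h => if_neg fun hj => ne_zero_of_mem_colSupp_contribClass hj h, ?_⟩
  ext i j
  rw [Matrix.mul_apply]
  by_cases hblock :
      ∃ k₀, i ∈ rowSupp L R (contribClass L R k₀) ∧ j ∈ colSupp L R (contribClass L R k₀)
  · obtain ⟨k₀, hi, hj⟩ := hblock
    rw [hBC _ (mem_classes.2 ⟨k₀, rfl⟩) i hi j hj, ← sum_subset (subset_univ (contribClass L R k₀))]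
    · refine sum_congr rfl fun k hk => ?_
      simp only [X₁, X₂, contribClass_eq_of_mem hk, if_pos hi, if_pos hj]
    · intro k _ hk
      by_contra hne
      obtain ⟨hik, hjk⟩ := hterm i j k hne
      exact hk (mem_contribClass_of_contrib_ne_zero hd hi hj
        (contrib_ne_zero_of_mem_rowSupp_of_mem_colSupp hik hjk))
  · simp only [not_exists, not_and] at hblock
    rw [hA i j (mul_apply_eq_zero_iff_forall_contrib.2 fun k => ?_)]
    · refine (sum_eq_zero fun k _ => ?_).symm
      by_contra hne
      obtain ⟨hik, hjk⟩ := hterm i j k hne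
      exact hblock k hik hjk
    · by_contra hne
      exact hblock k (mem_rowSupp_contribClass.2 ⟨j, hne⟩) (mem_colSupp_contribClass.2 ⟨i, hne⟩)

theorem exists_supported_factors_iff (hd : ContribSupportsDisjoint L R)
    (A : Matrix (Fin m) (Fin n) ℂ) :
    (∃ (X₁ : Matrix (Fin m) (Fin r) ℂ) (X₂ : Matrix (Fin r) (Fin n) ℂ),
        (∀ i k, L i k = 0 → X₁ i k = 0) ∧ (∀ k j, R k j = 0 → X₂ k j = 0) ∧ A = X₁ * X₂) ↔
      (∀ i j, (L * R) i j = 0 → A i j = 0) ∧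
        ∀ P ∈ classes L R, (subm A (rowSupp L R P) (colSupp L R P)).rank ≤ #P := by
  refine ⟨?_, fun h => exists_supported_factors_of_rank_le hd h.1 h.2⟩
  rintro ⟨X₁, X₂, h₁, h₂, rfl⟩
  exact ⟨fun i j => mul_apply_eq_zero_of_supported h₁ h₂,
    fun P hP => rank_subm_mul_le_card_of_mem_classes h₁ h₂ hd hP⟩

end Characterization

lemma kron3Equiv_val (a b d : ℕ) (p : Fin a) (q : Fin b) (s : Fin d) :
    (kron3Equiv a b d ((p, q), s) : ℕ) = (p * b + q) * d + s := by
  simp only [kron3Equiv, Equiv.trans_apply, Equiv.prodCongr_apply, Equiv.coe_refl,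
    Prod.map_apply, id_eq, finProdFinEquiv_apply_val]
  ring

lemma kron3Equiv_val_div {a b d : ℕ} (p : Fin a) (q : Fin b) (s : Fin d) :
    (kron3Equiv a b d ((p, q), s) : ℕ) / (b * d) = p := by
  have hlt : q * d + s < b * d := by nlinarith [q.2, s.2]
  rw [kron3Equiv_val, show (p * b + q) * d + s = (q * d + s) + b * d * p by ring,
    Nat.add_mul_div_left _ _ (by omega), Nat.div_eq_of_lt hlt, zero_add]

lemma kron3Equiv_val_mod {a b d : ℕ} (p : Fin a) (q : Fin b) (s : Fin d) :
    (kron3Equiv a b d ((p, q), s) : ℕ) % d = s := by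
  rw [kron3Equiv_val, show (p * b + q) * d + s = s + d * (p * b + q) by ring,
    Nat.add_mul_mod_self_left, Nat.mod_eq_of_lt s.2]

namespace Pattern

-- Row `((p, q), s)` and column `((p', q'), s')` of `S_π` meet in a nonzero entry iff `p = p'`
-- and `s = s'`; this is that condition on the indices flattened by `kron3Equiv`.
def InSupport (π : Pattern) (i j : ℕ) : Prop :=
  i / (π.b * π.d) = j / (π.c * π.d) ∧ i % π.d = j % π.d

instance (π : Pattern) (i j : ℕ) : Decidable (π.InSupport i j) :=
  inferInstanceAs (Decidable (_ ∧ _))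

lemma S_kron3Equiv (π : Pattern) (p p' : Fin π.a) (q : Fin π.b) (q' : Fin π.c) (s s' : Fin π.d) :
    π.S (kron3Equiv π.a π.b π.d ((p, q), s)) (kron3Equiv π.a π.c π.d ((p', q'), s')) =
      if p = p' ∧ s = s' then 1 else 0 := by
  simp only [Pattern.S, kron3Equiv, Matrix.reindex_apply, Matrix.submatrix_apply,
    Equiv.symm_apply_apply, Matrix.kroneckerMap_apply, Matrix.one_apply, Matrix.of_apply, mul_one]
  split_ifs <;> simp_all

lemma exists_S_ne_zero_left (π : Pattern) (hb : 0 < π.b) (j : Fin π.cols) : ∃ i, π.S i j ≠ 0 := by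
  obtain ⟨⟨⟨p, q⟩, s⟩, rfl⟩ := (kron3Equiv π.a π.c π.d).surjective j
  exact ⟨kron3Equiv π.a π.b π.d ((p, ⟨0, hb⟩), s), by simp [S_kron3Equiv]⟩

lemma exists_S_ne_zero_right (π : Pattern) (hc : 0 < π.c) (i : Fin π.rows) : ∃ j, π.S i j ≠ 0 := by
  obtain ⟨⟨⟨p, q⟩, s⟩, rfl⟩ := (kron3Equiv π.a π.b π.d).surjective i
  exact ⟨kron3Equiv π.a π.c π.d ((p, ⟨0, hc⟩), s), by simp [S_kron3Equiv]⟩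

lemma S_apply (π : Pattern) (i : Fin π.rows) (j : Fin π.cols) :
    π.S i j = if π.InSupport i j then 1 else 0 := by
  obtain ⟨⟨⟨p, q⟩, s⟩, rfl⟩ := (kron3Equiv π.a π.b π.d).surjective i
  obtain ⟨⟨⟨p', q'⟩, s'⟩, rfl⟩ := (kron3Equiv π.a π.c π.d).surjective j
  rw [S_kron3Equiv]
  refine if_congr ?_ rfl rfl
  rw [InSupport, kron3Equiv_val_div, kron3Equiv_val_div, kron3Equiv_val_mod, kron3Equiv_val_mod,
    Fin.val_inj, Fin.val_inj]

variable {π₁ π₂ : Pattern}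

lemma Chainable.rk_pos (hch : π₁.Chainable π₂) : 0 < rk π₁ π₂ := hch.2.2.2.1

lemma Chainable.rk_mul_d (hch : π₁.Chainable π₂) : rk π₁ π₂ * π₁.d = π₂.b * π₂.d := by
  obtain ⟨-, hdvd, heq, -⟩ := hch
  rw [rk, heq]
  exact Nat.div_mul_cancel hdvd

lemma Chainable.c_mul_d (hch : π₁.Chainable π₂) (hdim : π₁.cols = π₂.rows) (ha : 0 < π₁.a) :
    π₁.c * π₁.d = π₂.b * π₂.d * (π₂.a / π₁.a) := by
  obtain ⟨-, -, -, -, ⟨q, hq⟩, -⟩ := hch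
  refine Nat.eq_of_mul_eq_mul_left ha ?_
  have hdim' : π₁.a * π₁.c * π₁.d = π₁.a * q * π₂.b * π₂.d := by rw [← hq]; exact hdim
  rw [hq, Nat.mul_div_cancel_left _ ha]
  linarith

lemma Chainable.mul_b_mul_d (hch : π₁.Chainable π₂) :
    (π₁ * π₂).b * (π₁ * π₂).d = π₁.b * π₁.d := by
  obtain ⟨-, -, -, -, -, hd⟩ := hch
  exact Nat.div_mul_cancel (dvd_mul_of_dvd_right hd _)

lemma Chainable.mul_c_mul_d (hch : π₁.Chainable π₂) :
    (π₁ * π₂).c * (π₁ * π₂).d = π₂.c * π₂.d * (π₂.a / π₁.a) := by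
  obtain ⟨-, -, -, -, ha, -⟩ := hch
  change π₂.a * π₂.c / π₁.a * π₂.d = _
  rw [Nat.mul_div_right_comm ha]
  ring

lemma mul_d (π₁ π₂ : Pattern) : (π₁ * π₂).d = π₂.d := rfl

def middleKey (π₁ π₂ : Pattern) (m : ℕ) : ℕ × ℕ := (m / (π₂.b * π₂.d), m % π₁.d)

lemma Chainable.inSupport_and_inSupport_iff (hch : π₁.Chainable π₂) (hdim : π₁.cols = π₂.rows)
    (ha : 0 < π₁.a) {i m l : ℕ} :
    π₁.InSupport i m ∧ π₂.InSupport m l ↔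
      middleKey π₁ π₂ m = (l / (π₂.c * π₂.d), i % π₁.d) ∧ (π₁ * π₂).InSupport i l := by
  have hd : π₂.d ∣ π₁.d := hch.2.2.2.2.2
  rw [InSupport, InSupport, InSupport, hch.mul_b_mul_d, hch.mul_c_mul_d, hch.c_mul_d hdim ha,
    ← Nat.div_div_eq_div_mul m (π₂.b * π₂.d), ← Nat.div_div_eq_div_mul l (π₂.c * π₂.d), mul_d,
    middleKey, Prod.mk.injEq]
  constructor
  · rintro ⟨⟨h1, h2⟩, h3, h4⟩
    refine ⟨⟨h3, h2.symm⟩, by rw [h1, h3], ?_⟩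
    rw [← Nat.mod_mod_of_dvd i hd, h2, Nat.mod_mod_of_dvd m hd, h4]
  · rintro ⟨⟨h3, h2⟩, h1, h4⟩
    refine ⟨⟨by rw [h1, h3], h2.symm⟩, h3, ?_⟩
    rw [← Nat.mod_mod_of_dvd m hd, h2, Nat.mod_mod_of_dvd i hd]
    exact h4

-- `m = (k * r + t) * d₁ + j` is sent to `((k, j), t)`, where `middleKey m = (k, j)`.
def Chainable.middleEquiv (hch : π₁.Chainable π₂) (hdim : π₁.cols = π₂.rows) :
    Fin π₁.cols ≃ (Fin π₂.a × Fin π₁.d) × Fin (rk π₁ π₂) :=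
  (finCongr (show π₁.cols = π₂.a * (rk π₁ π₂ * π₁.d) by
    rw [hdim, rows, mul_assoc, hch.rk_mul_d])).trans <|
    finProdFinEquiv.symm.trans <| ((Equiv.refl _).prodCongr <|
      finProdFinEquiv.symm.trans (Equiv.prodComm _ _)).trans (Equiv.prodAssoc _ _ _).symm

lemma Chainable.middleKey_eq (hch : π₁.Chainable π₂) (hdim : π₁.cols = π₂.rows)
    (m : Fin π₁.cols) :
    middleKey π₁ π₂ m =
      (((hch.middleEquiv hdim m).1.1 : ℕ), ((hch.middleEquiv hdim m).1.2 : ℕ)) := by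
  simp [middleEquiv, middleKey, hch.rk_mul_d, Nat.mod_mod_of_dvd _ hch.2.1]

lemma Chainable.exists_middleKey_eq (hch : π₁.Chainable π₂) (hdim : π₁.cols = π₂.rows)
    {k j : ℕ} (hk : k < π₂.a) (hj : j < π₁.d) : ∃ m : Fin π₁.cols, middleKey π₁ π₂ m = (k, j) :=
  ⟨(hch.middleEquiv hdim).symm ((⟨k, hk⟩, ⟨j, hj⟩), ⟨0, hch.rk_pos⟩), by
    rw [hch.middleKey_eq hdim, Equiv.apply_symm_apply]⟩

lemma Chainable.card_filter_middleKey_eq (hch : π₁.Chainable π₂) (hdim : π₁.cols = π₂.rows)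
    (m₀ : Fin π₁.cols) :
    #{m : Fin π₁.cols | middleKey π₁ π₂ m = middleKey π₁ π₂ m₀} = rk π₁ π₂ := by
  rw [card_equiv (hch.middleEquiv hdim) (t := {(hch.middleEquiv hdim m₀).1} ×ˢ univ)]
  · simp
  · intro m
    simp only [mem_filter, mem_univ, true_and, mem_product, mem_singleton, and_true,
      hch.middleKey_eq hdim, Prod.ext_iff, Fin.val_inj]

lemma Chainable.contrib_S_apply (hch : π₁.Chainable π₂) (hdim : π₁.cols = π₂.rows)
    (ha : 0 < π₁.a) (m : Fin π₁.cols) (i : Fin π₁.rows) (l : Fin π₂.cols) :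
    contrib π₁.S (castMat hdim.symm rfl π₂.S) m i l =
      if middleKey π₁ π₂ m = (l / (π₂.c * π₂.d), i % π₁.d) ∧ (π₁ * π₂).InSupport i l
      then 1 else 0 := by
  change π₁.S i m * π₂.S (Fin.cast hdim m) l = _
  rw [S_apply, S_apply, ite_zero_mul_ite_zero, one_mul]
  exact if_congr (hch.inSupport_and_inSupport_iff hdim ha) rfl rfl

lemma Chainable.contrib_S_ne_zero_iff (hch : π₁.Chainable π₂) (hdim : π₁.cols = π₂.rows)
    (ha : 0 < π₁.a) (m : Fin π₁.cols) (i : Fin π₁.rows) (l : Fin π₂.cols) :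
    contrib π₁.S (castMat hdim.symm rfl π₂.S) m i l ≠ 0 ↔
      middleKey π₁ π₂ m = (l / (π₂.c * π₂.d), i % π₁.d) ∧ (π₁ * π₂).InSupport i l := by
  simp [hch.contrib_S_apply hdim ha]

lemma Chainable.contribSupportsDisjoint (hch : π₁.Chainable π₂) (hdim : π₁.cols = π₂.rows)
    (ha : 0 < π₁.a) : ContribSupportsDisjoint π₁.S (castMat hdim.symm rfl π₂.S) := by
  intro m m' i l hm hm'
  ext i' l'
  rw [hch.contrib_S_apply hdim ha, hch.contrib_S_apply hdim ha,
    ((hch.contrib_S_ne_zero_iff hdim ha m i l).1 hm).1,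
    ((hch.contrib_S_ne_zero_iff hdim ha m' i l).1 hm').1]

lemma Chainable.middleKey_eq_of_contrib_eq (hch : π₁.Chainable π₂) (hdim : π₁.cols = π₂.rows)
    (h₁ : π₁.Pos) (h₂ : π₂.Pos) {m m' : Fin π₁.cols}
    (h : contrib π₁.S (castMat hdim.symm rfl π₂.S) m =
      contrib π₁.S (castMat hdim.symm rfl π₂.S) m') :
    middleKey π₁ π₂ m = middleKey π₁ π₂ m' := by
  obtain ⟨ha, hb, -, -⟩ := h₁
  obtain ⟨-, -, hc, -⟩ := h₂
  obtain ⟨i, hi⟩ := π₁.exists_S_ne_zero_left hb m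
  obtain ⟨l, hl⟩ := π₂.exists_S_ne_zero_right hc (Fin.cast hdim m)
  have hm : contrib π₁.S (castMat hdim.symm rfl π₂.S) m i l ≠ 0 := mul_ne_zero hi hl
  rw [((hch.contrib_S_ne_zero_iff hdim ha m i l).1 hm).1,
    ((hch.contrib_S_ne_zero_iff hdim ha m' i l).1 (h ▸ hm)).1]

lemma Chainable.contribClass_eq (hch : π₁.Chainable π₂) (hdim : π₁.cols = π₂.rows)
    (h₁ : π₁.Pos) (h₂ : π₂.Pos) (m₀ : Fin π₁.cols) :
    contribClass π₁.S (castMat hdim.symm rfl π₂.S) m₀ =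
      ({m | middleKey π₁ π₂ m = middleKey π₁ π₂ m₀} : Finset (Fin π₁.cols)) := by
  ext m
  rw [mem_contribClass, mem_filter, and_iff_right (mem_univ m)]
  refine ⟨hch.middleKey_eq_of_contrib_eq hdim h₁ h₂, fun h => ?_⟩
  ext i l
  rw [hch.contrib_S_apply hdim h₁.1, hch.contrib_S_apply hdim h₁.1, h]

lemma Chainable.card_eq_rk_of_mem_classes (hch : π₁.Chainable π₂) (hdim : π₁.cols = π₂.rows)
    (h₁ : π₁.Pos) (h₂ : π₂.Pos) {P : Finset (Fin π₁.cols)}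
    (hP : P ∈ classes π₁.S (castMat hdim.symm rfl π₂.S)) : #P = rk π₁ π₂ := by
  obtain ⟨m₀, rfl⟩ := mem_classes.1 hP
  rw [hch.contribClass_eq hdim h₁ h₂, hch.card_filter_middleKey_eq hdim]

lemma Chainable.S_mul_castMat_S_apply_eq_zero_iff (hch : π₁.Chainable π₂)
    (hdim : π₁.cols = π₂.rows) (h₁ : π₁.Pos) (hr : (π₁ * π₂).rows = π₁.rows) (hc : (π₁ * π₂).cols = π₂.cols)
    (i : Fin π₁.rows) (l : Fin π₂.cols) :
    (π₁.S * castMat hdim.symm rfl π₂.S) i l = 0 ↔ castMat hr hc (π₁ * π₂).S i l = 0 := by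
  obtain ⟨ha, -, -, hd⟩ := h₁
  change _ ↔ (π₁ * π₂).S (Fin.cast hr.symm i) (Fin.cast hc.symm l) = 0
  rw [mul_apply_eq_zero_iff_forall_contrib, S_apply, ite_eq_right_iff, Fin.val_cast, Fin.val_cast]
  simp only [hch.contrib_S_apply hdim ha, ite_eq_right_iff, one_ne_zero, imp_false, not_and]
  refine ⟨fun h hs => ?_, fun h m _ => h⟩
  have hk : l / (π₂.c * π₂.d) < π₂.a :=
    Nat.div_lt_of_lt_mul (l.2.trans_eq (by rw [cols]; ring))
  obtain ⟨m, hm⟩ := hch.exists_middleKey_eq hdim hk (Nat.mod_lt i hd)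
  exact h m hm hs

end Pattern

lemma exists_isFactor_mul_castMat_iff {π₁ π₂ : Pattern} (hdim : π₁.cols = π₂.rows)
    (A : Matrix (Fin π₁.rows) (Fin π₂.cols) ℂ) :
    (∃ (X₁ : Matrix (Fin π₁.rows) (Fin π₁.cols) ℂ) (X₂ : Matrix (Fin π₂.rows) (Fin π₂.cols) ℂ),
        IsFactor π₁ X₁ ∧ IsFactor π₂ X₂ ∧ A = X₁ * castMat hdim.symm rfl X₂) ↔
      ∃ (X₁ : Matrix (Fin π₁.rows) (Fin π₁.cols) ℂ) (X₂ : Matrix (Fin π₁.cols) (Fin π₂.cols) ℂ),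
        (∀ i k, π₁.S i k = 0 → X₁ i k = 0) ∧
          (∀ k j, castMat hdim.symm rfl π₂.S k j = 0 → X₂ k j = 0) ∧ A = X₁ * X₂ := by
  constructor
  · rintro ⟨X₁, X₂, h₁, h₂, rfl⟩
    exact ⟨X₁, castMat hdim.symm rfl X₂, h₁, fun k j => h₂ (Fin.cast hdim k) j, rfl⟩
  · rintro ⟨X₁, X₂, h₁, h₂, rfl⟩
    exact ⟨X₁, castMat hdim rfl X₂, h₁, fun k j => h₂ (Fin.cast hdim.symm k) j, rfl⟩

/-- **Lemma.** For a chainable pair `(π₁, π₂)`, a matrix `A` is a product of a `π₁`-factor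
and a `π₂`-factor if and only if its support is contained in that of `S_{π₁*π₂}` and all of
its blocks `A[R_P, C_P]` have rank at most `r(π₁, π₂)`. -/
theorem two_factor_characterization (π₁ π₂ : Pattern)
    (h₁ : π₁.Pos) (h₂ : π₂.Pos) (hch : Pattern.Chainable π₁ π₂)
    (hdim : π₁.cols = π₂.rows)
    (hr : (π₁ * π₂).rows = π₁.rows) (hc : (π₁ * π₂).cols = π₂.cols)
    (A : Matrix (Fin π₁.rows) (Fin π₂.cols) ℂ) :
    (∃ (X₁ : Matrix (Fin π₁.rows) (Fin π₁.cols) ℂ)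
        (X₂ : Matrix (Fin π₂.rows) (Fin π₂.cols) ℂ),
        IsFactor π₁ X₁ ∧ IsFactor π₂ X₂ ∧ A = X₁ * castMat hdim.symm rfl X₂) ↔
      ((∀ i j, castMat hr hc (π₁ * π₂).S i j = 0 → A i j = 0) ∧
        ∀ P ∈ classes π₁.S (castMat hdim.symm rfl π₂.S),
          (subm A (rowSupp π₁.S (castMat hdim.symm rfl π₂.S) P)
              (colSupp π₁.S (castMat hdim.symm rfl π₂.S) P)).rank ≤
            Pattern.rk π₁ π₂) := by
  rw [exists_isFactor_mul_castMat_iff hdim,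
    exists_supported_factors_iff (hch.contribSupportsDisjoint hdim h₁.1)]
  refine and_congr (forall₂_congr fun i l => ?_) (forall₂_congr fun P hP => ?_)
  · rw [hch.S_mul_castMat_S_apply_eq_zero_iff hdim h₁ hr hc]
  · rw [hch.card_eq_rk_of_mem_classes hdim h₁ h₂ hP]
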